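/- Let X and Y be Hilbert spaces, C ⊆ X a nonempty closed convex set, ψ† ∈ C, and T, T_h : X → Y bounded linear operators with ‖T − T_h‖ ≤ η_h. Assume the variational source condition holds with constant β > 0 and a strictly increasing concave function φ : [0,∞) → [0,∞) with φ(0) = 0 which is moreover differentiable on (0,∞) with φ'(t) > 0. Let S^δ ∈ Y with ‖S^δ − Tψ†‖ ≤ δ, set t₀ := η_h² ‖ψ†‖² + δ² (assumed > 0), choose the regularization parameter α := η_h² + 1/(4 φ'(t₀)), and let ψ_reg ∈ C be a minimizer over C of ψ ↦ ‖T_h ψ − S^δ‖² + α‖ψ‖². Then there is a constant c > 0, independent of δ, η_h, S^δ and ψ_reg, such that β‖ψ_reg − ψ†‖² ≤ c · φ(η_h² ‖ψ†‖² + δ²). -/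

import Mathlib

/-!
Tangent-line bound for the concave `φ` at `t₀ = η²‖ψ†‖² + δ²` turns the variational source
condition at `ψ_reg` into `β‖ψ_reg - ψ†‖² ≤ ‖ψ_reg‖² - ‖ψ†‖² + φ(t₀) + φ'(t₀)(‖T(ψ_reg - ψ†)‖² - t₀)`.
Comparing the Tikhonov functional at `ψ_reg` and at `ψ†` bounds both the residual and
`‖ψ_reg‖² - ‖ψ†‖²`, hence `‖T(ψ_reg - ψ†)‖² = O(t₀ + (‖ψ†‖² - ‖ψ_reg‖²)/φ'(t₀))`; the choice
`α - η² = 1/(4φ'(t₀))` makes the norm terms cancel up to `O(φ'(t₀) t₀)`, and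
`φ'(t₀) t₀ ≤ φ(t₀)` by concavity and `φ 0 = 0`.
-/

theorem ConcaveOn.le_add_mul_sub_of_hasDerivAt {S : Set ℝ} {f : ℝ → ℝ} {x y f' : ℝ}
    (hfc : ConcaveOn ℝ S f) (hx : x ∈ S) (hy : y ∈ S) (hf' : HasDerivAt f f' x) :
    f y ≤ f x + f' * (y - x) := by
  rcases lt_trichotomy y x with hyx | rfl | hxy
  · have h := hfc.le_slope_of_hasDerivAt hy hx hyx hf'
    rw [slope_def_field, le_div_iff₀ (sub_pos.mpr hyx)] at h
    linarith
  · simp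
  · have h := hfc.slope_le_of_hasDerivAt hx hy hxy hf'
    rw [slope_def_field, div_le_iff₀ (sub_pos.mpr hxy)] at h
    linarith

theorem ConcaveOn.mul_le_of_hasDerivAt_of_map_zero {S : Set ℝ} {f : ℝ → ℝ} {x f' : ℝ}
    (hfc : ConcaveOn ℝ S f) (h0 : (0 : ℝ) ∈ S) (hf0 : f 0 = 0) (hx : x ∈ S)
    (hf' : HasDerivAt f f' x) : f' * x ≤ f x := by
  have h := hfc.le_add_mul_sub_of_hasDerivAt hx h0 hf'
  rw [hf0] at h
  linarith

section Perturbation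

variable {𝕜 X Y : Type*} [NontriviallyNormedField 𝕜]
  [NormedAddCommGroup X] [NormedSpace 𝕜 X] [NormedAddCommGroup Y] [NormedSpace 𝕜 Y]
  {T Th : X →L[𝕜] Y} {η δ : ℝ} {S : Y} {x₀ : X}

theorem norm_apply_sub_apply_le (hT : ‖T - Th‖ ≤ η) (x : X) : ‖T x - Th x‖ ≤ η * ‖x‖ :=
  (T - Th).le_of_opNorm_le hT x

theorem sq_norm_apply_sub_le (hT : ‖T - Th‖ ≤ η) (hS : ‖S - T x₀‖ ≤ δ) :
    ‖Th x₀ - S‖ ^ 2 ≤ 2 * (η ^ 2 * ‖x₀‖ ^ 2 + δ ^ 2) := by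
  have h : ‖Th x₀ - S‖ ≤ η * ‖x₀‖ + δ :=
    (norm_sub_le_norm_sub_add_norm_sub _ (T x₀) _).trans <| add_le_add
      (by rw [norm_sub_rev]; exact norm_apply_sub_apply_le hT x₀)
      (by rw [norm_sub_rev]; exact hS)
  calc ‖Th x₀ - S‖ ^ 2 ≤ (η * ‖x₀‖ + δ) ^ 2 := pow_le_pow_left₀ (norm_nonneg _) h 2
    _ ≤ 2 * ((η * ‖x₀‖) ^ 2 + δ ^ 2) := add_sq_le
    _ = 2 * (η ^ 2 * ‖x₀‖ ^ 2 + δ ^ 2) := by ring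

theorem sq_norm_apply_sub_sub_le (hT : ‖T - Th‖ ≤ η) (hS : ‖S - T x₀‖ ≤ δ) (x : X) :
    ‖T (x - x₀)‖ ^ 2 ≤ 3 * (η ^ 2 * ‖x‖ ^ 2 + ‖Th x - S‖ ^ 2 + δ ^ 2) := by
  have h : ‖T (x - x₀)‖ ≤ η * ‖x‖ + ‖Th x - S‖ + δ := by
    rw [map_sub]
    calc ‖T x - T x₀‖ ≤ ‖T x - Th x‖ + ‖Th x - S‖ + ‖S - T x₀‖ :=
          (norm_sub_le_norm_sub_add_norm_sub _ S _).trans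
            (add_le_add_left (norm_sub_le_norm_sub_add_norm_sub _ _ _) _)
      _ ≤ η * ‖x‖ + ‖Th x - S‖ + δ := by
          gcongr
          exact norm_apply_sub_apply_le hT x
  calc ‖T (x - x₀)‖ ^ 2 ≤ (η * ‖x‖ + ‖Th x - S‖ + δ) ^ 2 :=
        pow_le_pow_left₀ (norm_nonneg _) h 2
    _ ≤ 3 * (η ^ 2 * ‖x‖ ^ 2 + ‖Th x - S‖ ^ 2 + δ ^ 2) := by
        nlinarith [sq_nonneg (η * ‖x‖ - ‖Th x - S‖), sq_nonneg (η * ‖x‖ - δ),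
          sq_nonneg (‖Th x - S‖ - δ)]

end Perturbation

-- `P, Q, R, E` stand for `‖ψ_reg‖², ‖ψ†‖², ‖T_h ψ_reg - S^δ‖², ‖T (ψ_reg - ψ†)‖²` and `d` for `φ'(t₀)`.
theorem tikhonov_rate_bound {d η δ P Q R E : ℝ} (hd : 0 < d) (hQ : 0 ≤ Q) (hR : 0 ≤ R)
    (hmin : R + (η ^ 2 + 1 / (4 * d)) * P ≤
      2 * (η ^ 2 * Q + δ ^ 2) + (η ^ 2 + 1 / (4 * d)) * Q)
    (hE : E ≤ 3 * (η ^ 2 * P + R + δ ^ 2)) :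
    P - Q + d * (E - (η ^ 2 * Q + δ ^ 2)) ≤ 13 * (d * (η ^ 2 * Q + δ ^ 2)) := by
  set t := η ^ 2 * Q + δ ^ 2
  set a := 1 / (4 * d)
  have hda : d * a = 1 / 4 := by simp only [a]; field_simp
  have hP : a * (P - Q) ≤ 2 * t := by
    rcases le_or_gt P Q with h | h
    · have ht : 0 ≤ t := by positivity
      have : a * (P - Q) ≤ 0 := mul_nonpos_of_nonneg_of_nonpos (by positivity) (sub_nonpos.mpr h)
      linarith
    · nlinarith [mul_nonneg (sq_nonneg η) (sub_pos.mpr h).le]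
  have hres : η ^ 2 * P + R ≤ 3 * t + a * (Q - P) := by nlinarith [sq_nonneg δ]
  have hδt : δ ^ 2 ≤ t := by nlinarith [sq_nonneg η]
  have hdE := mul_le_mul_of_nonneg_left hE hd.le
  have hdres := mul_le_mul_of_nonneg_left hres hd.le
  have hdP := mul_le_mul_of_nonneg_left hP hd.le
  have hdδ := mul_le_mul_of_nonneg_left hδt hd.le
  have hdaPQ : d * (a * (P - Q)) = (P - Q) / 4 := by rw [← mul_assoc, hda]; ring
  have hdaQP : d * (a * (Q - P)) = (Q - P) / 4 := by rw [← mul_assoc, hda]; ring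
  linarith

theorem stmt_1_general
    {X Y : Type*} [NormedAddCommGroup X] [InnerProductSpace ℝ X]
    [NormedAddCommGroup Y] [InnerProductSpace ℝ Y]
    (C : Set X)
    (ψdag : X) (hψdag : ψdag ∈ C)
    (T : X →L[ℝ] Y)
    (β : ℝ)
    (φ : ℝ → ℝ)
    (hφ_conc : ConcaveOn ℝ (Set.Ici 0) φ) (hφ0 : φ 0 = 0)
    (φ' : ℝ → ℝ) (hφ_deriv : ∀ t > 0, HasDerivAt φ (φ' t) t)
    (hφ'_pos : ∀ t > 0, 0 < φ' t)
    (hvsc : ∀ ψ ∈ C, β * ‖ψ - ψdag‖ ^ 2 ≤ ‖ψ‖ ^ 2 - ‖ψdag‖ ^ 2 + φ (‖T (ψ - ψdag)‖ ^ 2)) :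
    ∃ c > 0, ∀ (Th : X →L[ℝ] Y) (ηh δ : ℝ) (Sδ : Y) (ψreg : X),
      ‖T - Th‖ ≤ ηh → ‖Sδ - T ψdag‖ ≤ δ →
      0 < ηh ^ 2 * ‖ψdag‖ ^ 2 + δ ^ 2 →
      ψreg ∈ C →
      (∀ ψ ∈ C,
        ‖Th ψreg - Sδ‖ ^ 2 +
            (ηh ^ 2 + 1 / (4 * φ' (ηh ^ 2 * ‖ψdag‖ ^ 2 + δ ^ 2))) * ‖ψreg‖ ^ 2 ≤
          ‖Th ψ - Sδ‖ ^ 2 +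
            (ηh ^ 2 + 1 / (4 * φ' (ηh ^ 2 * ‖ψdag‖ ^ 2 + δ ^ 2))) * ‖ψ‖ ^ 2) →
      β * ‖ψreg - ψdag‖ ^ 2 ≤ c * φ (ηh ^ 2 * ‖ψdag‖ ^ 2 + δ ^ 2) := by
  refine ⟨14, by norm_num, fun Th ηh δ Sδ ψreg hT hS ht₀ hreg hmin => ?_⟩
  set t₀ := ηh ^ 2 * ‖ψdag‖ ^ 2 + δ ^ 2
  have hderiv := hφ_deriv t₀ ht₀
  have htangent := hφ_conc.le_add_mul_sub_of_hasDerivAt ht₀.le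
    (Set.mem_Ici.mpr (sq_nonneg ‖T (ψreg - ψdag)‖)) hderiv
  have hφt₀ := hφ_conc.mul_le_of_hasDerivAt_of_map_zero Set.self_mem_Ici hφ0 ht₀.le hderiv
  have hestimate := tikhonov_rate_bound (hφ'_pos t₀ ht₀) (sq_nonneg ‖ψdag‖)
    (sq_nonneg ‖Th ψreg - Sδ‖)
    ((hmin ψdag hψdag).trans (by gcongr; exact sq_norm_apply_sub_le hT hS))
    (sq_norm_apply_sub_sub_le hT hS ψreg)
  linarith [hvsc ψreg hreg]

/-- Convergence rate for the a-priori parameter choice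
`α = η_h² + 1/(4 φ'(η_h²‖ψ†‖² + δ²))`:
the reconstruction error satisfies `β‖ψ_reg − ψ†‖² ≤ c · φ(η_h²‖ψ†‖² + δ²)` with a
constant `c` independent of `δ`, `η_h`, `S^δ` and `ψ_reg`. -/
theorem stmt_1
    {X Y : Type*} [NormedAddCommGroup X] [InnerProductSpace ℝ X] [CompleteSpace X]
    [NormedAddCommGroup Y] [InnerProductSpace ℝ Y] [CompleteSpace Y]
    (C : Set X) (hC_ne : C.Nonempty) (hC_closed : IsClosed C) (hC_conv : Convex ℝ C)
    (ψdag : X) (hψdag : ψdag ∈ C)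
    (T : X →L[ℝ] Y)
    (β : ℝ) (hβ : 0 < β)
    (φ : ℝ → ℝ) (hφ_mono : StrictMonoOn φ (Set.Ici 0))
    (hφ_conc : ConcaveOn ℝ (Set.Ici 0) φ) (hφ0 : φ 0 = 0)
    (hφ_nonneg : ∀ t ≥ 0, 0 ≤ φ t)
    (φ' : ℝ → ℝ) (hφ_deriv : ∀ t > 0, HasDerivAt φ (φ' t) t)
    (hφ'_pos : ∀ t > 0, 0 < φ' t)
    (hvsc : ∀ ψ ∈ C, β * ‖ψ - ψdag‖ ^ 2 ≤ ‖ψ‖ ^ 2 - ‖ψdag‖ ^ 2 + φ (‖T (ψ - ψdag)‖ ^ 2)) :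
    ∃ c > 0, ∀ (Th : X →L[ℝ] Y) (ηh δ : ℝ) (Sδ : Y) (ψreg : X),
      ‖T - Th‖ ≤ ηh → ‖Sδ - T ψdag‖ ≤ δ →
      0 < ηh ^ 2 * ‖ψdag‖ ^ 2 + δ ^ 2 →
      ψreg ∈ C →
      (∀ ψ ∈ C,
        ‖Th ψreg - Sδ‖ ^ 2 +
            (ηh ^ 2 + 1 / (4 * φ' (ηh ^ 2 * ‖ψdag‖ ^ 2 + δ ^ 2))) * ‖ψreg‖ ^ 2 ≤
          ‖Th ψ - Sδ‖ ^ 2 +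
            (ηh ^ 2 + 1 / (4 * φ' (ηh ^ 2 * ‖ψdag‖ ^ 2 + δ ^ 2))) * ‖ψ‖ ^ 2) →
      β * ‖ψreg - ψdag‖ ^ 2 ≤ c * φ (ηh ^ 2 * ‖ψdag‖ ^ 2 + δ ^ 2) :=
  stmt_1_general C ψdag hψdag T β φ hφ_conc hφ0 φ' hφ_deriv hφ'_pos hvsc
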